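/- Let f : I → ℝ be continuous at ω₀ and q,ω-differentiable on I. Then for all a, b ∈ I, the function D_{q,ω}f is q,ω-integrable on [a,b] and ∫_{a}^{b} D_{q,ω}f(t) d_{q,ω}t = f(b) − f(a). -/

import Mathlib

open Filter Topology

noncomputable section

/-- The fixed point `ω₀ := ω/(1-q)` of `t ↦ qt + ω`. -/
def hahnOmega0 (q ω : ℝ) : ℝ := ω / (1 - q)

/-- The Hahn difference operator `D_{q,ω}`:
`D_{q,ω}f(t) = (f(qt+ω) - f t)/((qt+ω) - t)` for `t ≠ ω₀`, and the ordinary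
derivative at `t = ω₀`. -/
def hahnDeriv (q ω : ℝ) (f : ℝ → ℝ) (t : ℝ) : ℝ :=
  if t = hahnOmega0 q ω then deriv f t
  else (f (q * t + ω) - f t) / ((q * t + ω) - t)

/-- `f` is `q,ω`-differentiable at `t` (automatic off `ω₀`; at `ω₀` it means
ordinary (Fréchet) differentiability). -/
def HahnDiffAt (q ω : ℝ) (f : ℝ → ℝ) (t : ℝ) : Prop :=
  t = hahnOmega0 q ω → DifferentiableAt ℝ f t

/-- The point `x q^k + [k]_{q,ω}` where `[k]_{q,ω} = ω(1-q^k)/(1-q)`. -/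
def jnPoint (q ω x : ℝ) (k : ℕ) : ℝ := x * q ^ k + ω * (1 - q ^ k) / (1 - q)

/-- Partial sums of the Jackson–Nörlund series at `x`. -/
def jnPartial (q ω : ℝ) (f : ℝ → ℝ) (x : ℝ) (n : ℕ) : ℝ :=
  ∑ k ∈ Finset.range n, q ^ k * f (jnPoint q ω x k)

/-- Convergence of the Jackson–Nörlund series `Σ q^k f(x q^k + [k]_{q,ω})`. -/
def JNConvergesAt (q ω : ℝ) (f : ℝ → ℝ) (x : ℝ) : Prop :=
  ∃ S : ℝ, Tendsto (jnPartial q ω f x) atTop (𝓝 S)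

/-- The Jackson–Nörlund integral `∫_{ω₀}^{x} f(t) d_{q,ω}t`. -/
def jnSum (q ω : ℝ) (f : ℝ → ℝ) (x : ℝ) : ℝ :=
  (x * (1 - q) - ω) * limUnder atTop (jnPartial q ω f x)

/-- The Jackson–Nörlund integral `∫_{a}^{b} f(t) d_{q,ω}t`. -/
def jnIntegral (q ω : ℝ) (f : ℝ → ℝ) (a b : ℝ) : ℝ :=
  jnSum q ω f b - jnSum q ω f a

/-- The orbit `{q^n s + [n]_{q,ω} : n ∈ ℕ}`. -/
def qwOrbit (q ω s : ℝ) : Set ℝ := Set.range (jnPoint q ω s)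

/-- The orbit together with `ω₀`, i.e. `[s]_{q,ω}`. -/
def qwClosedOrbit (q ω s : ℝ) : Set ℝ := qwOrbit q ω s ∪ {hahnOmega0 q ω}

/-- The `q,ω`-interval `[a,b]_{q,ω}`. -/
def qwInterval (q ω a b : ℝ) : Set ℝ :=
  qwOrbit q ω a ∪ qwOrbit q ω b ∪ {hahnOmega0 q ω}

/-!
Away from `ω₀` the weight `q^k` cancels the step `jnPoint (k+1) - jnPoint k = -q^k (x(1-q) - ω)`
of the Hahn quotient, so the Jackson–Nörlund series of `D_{q,ω}f` telescopes: its `n`-th partial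
sum is `(f x - f (jnPoint n)) / (x(1-q) - ω)`. The points converge geometrically to `ω₀`, so
continuity of `f` at `ω₀` gives `∫_{ω₀}^x D_{q,ω}f = f x - f ω₀`. At `x = ω₀` the prefactor
`x(1-q) - ω` vanishes and the series is geometric, so the identity holds there as well.
-/

section JacksonNorlund

variable {q ω : ℝ}

lemma sub_hahnOmega0_mul_one_sub (hq : q ≠ 1) (x : ℝ) :
    (x - hahnOmega0 q ω) * (1 - q) = x * (1 - q) - ω := by
  have : (1 : ℝ) - q ≠ 0 := sub_ne_zero.mpr hq.symm
  unfold hahnOmega0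
  field_simp

lemma mul_one_sub_sub_ne_zero (hq : q ≠ 1) {x : ℝ} (hx : x ≠ hahnOmega0 q ω) :
    x * (1 - q) - ω ≠ 0 := by
  rw [← sub_hahnOmega0_mul_one_sub hq]
  exact mul_ne_zero (sub_ne_zero.mpr hx) (sub_ne_zero.mpr hq.symm)

lemma jnPoint_sub_hahnOmega0 (hq : q ≠ 1) (x : ℝ) (k : ℕ) :
    jnPoint q ω x k - hahnOmega0 q ω = q ^ k * (x - hahnOmega0 q ω) := by
  have : (1 : ℝ) - q ≠ 0 := sub_ne_zero.mpr hq.symm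
  unfold jnPoint hahnOmega0
  field_simp
  ring

lemma jnPoint_succ (hq : q ≠ 1) (x : ℝ) (k : ℕ) :
    jnPoint q ω x (k + 1) = q * jnPoint q ω x k + ω := by
  have : (1 : ℝ) - q ≠ 0 := sub_ne_zero.mpr hq.symm
  unfold jnPoint
  field_simp
  ring

lemma jnPoint_hahnOmega0 (hq : q ≠ 1) (k : ℕ) :
    jnPoint q ω (hahnOmega0 q ω) k = hahnOmega0 q ω := by
  simpa [sub_eq_zero] using jnPoint_sub_hahnOmega0 (ω := ω) hq (hahnOmega0 q ω) k

lemma tendsto_jnPoint (hq : |q| < 1) (x : ℝ) :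
    Tendsto (jnPoint q ω x) atTop (𝓝 (hahnOmega0 q ω)) := by
  have hq1 : q ≠ 1 := (abs_lt.mp hq).2.ne
  have hlim := ((tendsto_pow_atTop_nhds_zero_of_abs_lt_one hq).mul_const
    (x - hahnOmega0 q ω)).const_add (hahnOmega0 q ω)
  rw [zero_mul, add_zero] at hlim
  refine hlim.congr fun k => ?_
  rw [← jnPoint_sub_hahnOmega0 hq1]
  ring

lemma jnSum_hahnOmega0 (hq : q ≠ 1) (g : ℝ → ℝ) : jnSum q ω g (hahnOmega0 q ω) = 0 := by
  rw [jnSum, ← sub_hahnOmega0_mul_one_sub hq, sub_self, zero_mul, zero_mul]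

lemma pow_mul_hahnDeriv_jnPoint (hq : q ≠ 1) (f : ℝ → ℝ) {x : ℝ} (hx : x ≠ hahnOmega0 q ω)
    (k : ℕ) :
    q ^ k * hahnDeriv q ω f (jnPoint q ω x k)
      = (f (jnPoint q ω x k) - f (jnPoint q ω x (k + 1))) / (x * (1 - q) - ω) := by
  have hC := mul_one_sub_sub_ne_zero hq hx
  by_cases hqk : q ^ k = 0
  · -- the orbit has already reached `ω₀`, which happens only for `q = 0`
    have hk : ∀ j, k ≤ j → jnPoint q ω x j = hahnOmega0 q ω := fun j hj => by
      rw [← sub_eq_zero, jnPoint_sub_hahnOmega0 hq, pow_eq_zero_of_le hj hqk, zero_mul]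
    rw [hqk, zero_mul, hk k le_rfl, hk (k + 1) k.le_succ, sub_self, zero_div]
  have hstep : q * jnPoint q ω x k + ω - jnPoint q ω x k = -(q ^ k * (x * (1 - q) - ω)) := by
    rw [← jnPoint_succ hq, ← sub_hahnOmega0_mul_one_sub hq,
      ← sub_sub_sub_cancel_right _ _ (hahnOmega0 q ω), jnPoint_sub_hahnOmega0 hq,
      jnPoint_sub_hahnOmega0 hq]
    ring
  have hpk : jnPoint q ω x k ≠ hahnOmega0 q ω := by
    rw [ne_eq, ← sub_eq_zero, jnPoint_sub_hahnOmega0 hq]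
    exact mul_ne_zero hqk (sub_ne_zero.mpr hx)
  rw [hahnDeriv, if_neg hpk, hstep, ← jnPoint_succ hq]
  field_simp
  ring

lemma jnPartial_hahnDeriv (hq : q ≠ 1) (f : ℝ → ℝ) {x : ℝ} (hx : x ≠ hahnOmega0 q ω) (n : ℕ) :
    jnPartial q ω (hahnDeriv q ω f) x n
      = (f x - f (jnPoint q ω x n)) / (x * (1 - q) - ω) := by
  simp only [jnPartial, pow_mul_hahnDeriv_jnPoint hq f hx, ← Finset.sum_div,
    Finset.sum_range_sub' (fun k => f (jnPoint q ω x k))]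
  simp [jnPoint]

lemma tendsto_jnPartial_hahnDeriv (hq : |q| < 1) {f : ℝ → ℝ}
    (hf : ContinuousAt f (hahnOmega0 q ω)) {x : ℝ} (hx : x ≠ hahnOmega0 q ω) :
    Tendsto (jnPartial q ω (hahnDeriv q ω f) x) atTop
      (𝓝 ((f x - f (hahnOmega0 q ω)) / (x * (1 - q) - ω))) := by
  have hq1 : q ≠ 1 := (abs_lt.mp hq).2.ne
  rw [funext (jnPartial_hahnDeriv hq1 f hx)]
  exact ((hf.tendsto.comp (tendsto_jnPoint hq x)).const_sub (f x)).div_const _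

lemma jnConvergesAt_hahnDeriv (hq : |q| < 1) {f : ℝ → ℝ}
    (hf : ContinuousAt f (hahnOmega0 q ω)) (x : ℝ) :
    JNConvergesAt q ω (hahnDeriv q ω f) x := by
  by_cases hx : x = hahnOmega0 q ω
  · have hq1 : q ≠ 1 := (abs_lt.mp hq).2.ne
    have hpartial : jnPartial q ω (hahnDeriv q ω f) x
        = fun n => ∑ k ∈ Finset.range n, q ^ k * deriv f x := by
      ext n
      refine Finset.sum_congr rfl fun k _ => ?_
      rw [hx, jnPoint_hahnOmega0 hq1, hahnDeriv, if_pos rfl]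
    exact ⟨_, hpartial ▸ ((hasSum_geometric_of_abs_lt_one hq).mul_right _).tendsto_sum_nat⟩
  · exact ⟨_, tendsto_jnPartial_hahnDeriv hq hf hx⟩

lemma jnSum_hahnDeriv (hq : |q| < 1) {f : ℝ → ℝ} (hf : ContinuousAt f (hahnOmega0 q ω))
    (x : ℝ) : jnSum q ω (hahnDeriv q ω f) x = f x - f (hahnOmega0 q ω) := by
  have hq1 : q ≠ 1 := (abs_lt.mp hq).2.ne
  by_cases hx : x = hahnOmega0 q ω
  · rw [hx, jnSum_hahnOmega0 hq1, sub_self]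
  rw [jnSum, (tendsto_jnPartial_hahnDeriv hq hf hx).limUnder_eq,
    mul_div_cancel₀ _ (mul_one_sub_sub_ne_zero hq1 hx)]

end JacksonNorlund

theorem jn_integral_hahn_deriv_general (q ω : ℝ) (hq0 : 0 < q) (hq1 : q < 1)
    (I : Set ℝ) (f : ℝ → ℝ) (hf : ContinuousAt f (hahnOmega0 q ω)) :
    ∀ a ∈ I, ∀ b ∈ I,
      JNConvergesAt q ω (hahnDeriv q ω f) a ∧
      JNConvergesAt q ω (hahnDeriv q ω f) b ∧
      jnIntegral q ω (hahnDeriv q ω f) a b = f b - f a := by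
  intro a _ b _
  have hq : |q| < 1 := abs_lt.mpr ⟨by linarith, hq1⟩
  refine ⟨jnConvergesAt_hahnDeriv hq hf a, jnConvergesAt_hahnDeriv hq hf b, ?_⟩
  rw [jnIntegral, jnSum_hahnDeriv hq hf, jnSum_hahnDeriv hq hf]
  ring

/-- `∫_a^b D_{q,ω}f(t) d_{q,ω}t = f(b) - f(a)` for `f` continuous
at `ω₀` and `q,ω`-differentiable on `I`. -/
theorem jn_integral_hahn_deriv (q ω : ℝ) (hq0 : 0 < q) (hq1 : q < 1)
    (hω : 0 < ω) (I : Set ℝ) (hI : I.OrdConnected) (hmem : hahnOmega0 q ω ∈ I)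
    (f : ℝ → ℝ) (hf : ContinuousAt f (hahnOmega0 q ω))
    (hdiff : ∀ t ∈ I, HahnDiffAt q ω f t) :
    ∀ a ∈ I, ∀ b ∈ I,
      JNConvergesAt q ω (hahnDeriv q ω f) a ∧
      JNConvergesAt q ω (hahnDeriv q ω f) b ∧
      jnIntegral q ω (hahnDeriv q ω f) a b = f b - f a :=
  jn_integral_hahn_deriv_general q ω hq0 hq1 I f hf
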